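/- arXiv:2106.01734 — 8 statements merged into one kernel-verified Lean document; each statement's English description precedes it below -/
import Mathlib

section
/- For predicates φ : A → Prop and ψ : B → Prop, the predicate φ ⊓ ψ on A × B is the greatest lower bound of φ and ψ with respect to instance reducibility: φ ⊓ ψ ≤ᵢ φ, φ ⊓ ψ ≤ᵢ ψ, and for every predicate θ : C → Prop with θ ≤ᵢ φ and θ ≤ᵢ ψ one has θ ≤ᵢ φ ⊓ ψ. -/
universe u v w

/-- Instance reducibility. -/
def InstRed {A : Type u} {B : Type v} (φ : A → Prop) (ψ : B → Prop) : Prop :=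
  ∀ x : A, ∃ y : B, ψ y → φ x

/-- The infimum of two predicates, defined on the product type. -/
def iInf2 {A : Type u} {B : Type v} (φ : A → Prop) (ψ : B → Prop) : A × B → Prop :=
  fun p => φ p.1 ∨ ψ p.2

section

variable {A : Type*} {B : Type*} {C : Type*} {φ : A → Prop} {ψ : B → Prop}

theorem iInf2_instRed_left (φ : A → Prop) (ψ : B → Prop) : InstRed (iInf2 φ ψ) φ :=
  fun p => ⟨p.1, Or.inl⟩

theorem iInf2_instRed_right (φ : A → Prop) (ψ : B → Prop) : InstRed (iInf2 φ ψ) ψ :=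
  fun p => ⟨p.2, Or.inr⟩

theorem InstRed.iInf2 {θ : C → Prop} (hφ : InstRed θ φ) (hψ : InstRed θ ψ) :
    InstRed θ (iInf2 φ ψ) := fun x => by
  obtain ⟨a, ha⟩ := hφ x
  obtain ⟨b, hb⟩ := hψ x
  exact ⟨(a, b), fun h => h.elim ha hb⟩

end

theorem iInf2_isGLB {A : Type u} {B : Type v} (φ : A → Prop) (ψ : B → Prop) :
    InstRed (iInf2 φ ψ) φ ∧ InstRed (iInf2 φ ψ) ψ ∧
    ∀ {C : Type w} (θ : C → Prop), InstRed θ φ → InstRed θ ψ → InstRed θ (iInf2 φ ψ) :=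
  ⟨iInf2_instRed_left φ ψ, iInf2_instRed_right φ ψ, fun _ => InstRed.iInf2⟩
end

section
/- Instance reducibility is distributive: for all predicates φ : A → Prop, ψ : B → Prop, and θ : C → Prop, the predicates (φ ⊔ ψ) ⊓ θ and (φ ⊓ θ) ⊔ (ψ ⊓ θ) are instance equivalent. -/
universe u v w

/-- Instance equivalence. -/
def InstEquiv {A : Type u} {B : Type v} (φ : A → Prop) (ψ : B → Prop) : Prop :=
  InstRed φ ψ ∧ InstRed ψ φ

/-- The supremum of two predicates, defined on the sum type. -/
def iSup2 {A : Type u} {B : Type v} (φ : A → Prop) (ψ : B → Prop) : A ⊕ B → Prop :=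
  Sum.elim φ ψ

theorem InstRed.of_map {A : Type u} {B : Type v} {φ : A → Prop} {ψ : B → Prop} (f : A → B)
    (h : ∀ x, ψ (f x) → φ x) : InstRed φ ψ :=
  fun x => ⟨f x, h x⟩

theorem InstEquiv.of_equiv {A : Type u} {B : Type v} {φ : A → Prop} {ψ : B → Prop} (e : A ≃ B)
    (h : ∀ x, φ x ↔ ψ (e x)) : InstEquiv φ ψ :=
  ⟨.of_map e fun x => (h x).2,
    .of_map e.symm fun y hy => by simpa only [Equiv.apply_symm_apply] using (h (e.symm y)).1 hy⟩

theorem instRed_distrib {A : Type u} {B : Type v} {C : Type w}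
    (φ : A → Prop) (ψ : B → Prop) (θ : C → Prop) :
    InstEquiv (iInf2 (iSup2 φ ψ) θ) (iSup2 (iInf2 φ θ) (iInf2 ψ θ)) :=
  .of_equiv (Equiv.sumProdDistrib A B C) fun
    | (.inl _, _) => .rfl
    | (.inr _, _) => .rfl
end

section
/- For every family of predicates φ i : A i → Prop indexed by a type I, the indexed infimum ⨅ᵢ φ is the greatest lower bound with respect to instance reducibility: ⨅ᵢ φ ≤ᵢ φ j for all j : I, and for every predicate ψ : B → Prop such that ψ ≤ᵢ φ i for all i : I, one has ψ ≤ᵢ ⨅ᵢ φ. -/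
universe u v w

/-- The indexed infimum, defined on the product of families of inhabited subsets. -/
def piInf {I : Type u} {A : I → Type v} (φ : ∀ i, A i → Prop) :
    (∀ i : I, {s : Set (A i) // s.Nonempty}) → Prop :=
  fun f => ∃ i, ∃ x ∈ (f i).val, φ i x

section

variable {I : Type u} {A : I → Type v}

theorem piInf_instRed (φ : ∀ i, A i → Prop) (j : I) : InstRed (piInf φ) (φ j) := fun f =>
  let ⟨y, hy⟩ := (f j).property
  ⟨y, fun hφ => ⟨j, y, hy, hφ⟩⟩

theorem piInf_singleton_iff (φ : ∀ i, A i → Prop) (y : ∀ i, A i) :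
    piInf φ (fun i => ⟨{y i}, Set.singleton_nonempty (y i)⟩) ↔ ∃ i, φ i (y i) := by
  simp [piInf]

theorem instRed_piInf {B : Type w} {φ : ∀ i, A i → Prop} {ψ : B → Prop}
    (h : ∀ i, InstRed ψ (φ i)) : InstRed ψ (piInf φ) := fun x => by
  choose y hy using fun i => h i x
  refine ⟨fun i => ⟨{y i}, Set.singleton_nonempty (y i)⟩, fun hinf => ?_⟩
  obtain ⟨i, hφ⟩ := (piInf_singleton_iff φ y).mp hinf
  exact hy i hφ

end

theorem piInf_isGLB {I : Type u} {A : I → Type v} (φ : ∀ i, A i → Prop) :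
    (∀ j : I, InstRed (piInf φ) (φ j)) ∧
    ∀ {B : Type w} (ψ : B → Prop), (∀ i : I, InstRed ψ (φ i)) → InstRed ψ (piInf φ) :=
  ⟨piInf_instRed φ, fun _ => instRed_piInf⟩
end

section
/- The map p ↦ ⌜p⌝ is an anti-monotone embedding of propositions into instance degrees: (1) for all p, q : Prop, ⌜p⌝ ≤ᵢ ⌜q⌝ if and only if q → p; moreover (2) ⌜True⌝ ≡ᵢ (fun _ : Unit => True); (3) ⌜False⌝ is a top element, i.e., ψ ≤ᵢ ⌜False⌝ for every predicate ψ; (4) for all p, q : Prop, ⌜p ∨ q⌝ ≡ᵢ ⌜p⌝ ⊓ ⌜q⌝; (5) for every predicate φ : A → Prop, ⌜∃ x : A, φ x⌝ ≡ᵢ ⨅ᵢ (fun x : A => ⌜φ x⌝), the indexed infimum of the family x ↦ ⌜φ x⌝. -/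
universe u v w

/-- The predicate on `Unit` with constant value `p`. -/
def truthDeg (p : Prop) : Unit → Prop := fun _ => p

/-! A predicate on a nonempty type that is everywhere equivalent to `p` is instance equivalent
to `⌜p⌝`. The infima `⌜p⌝ ⊓ ⌜q⌝` and `⨅ᵢ x, ⌜φ x⌝` are such predicates for `p ∨ q` and
`∃ x, φ x`, the latter because every nonempty subset of `Unit` contains `()`. -/

theorem instRed_truthDeg_iff {A : Type u} (φ : A → Prop) (q : Prop) :
    InstRed φ (truthDeg q) ↔ (q → ∀ x, φ x) :=
  ⟨fun h hq x => (h x).elim fun _ hy => hy hq, fun h x => ⟨(), fun hq => h hq x⟩⟩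

theorem instEquiv_truthDeg_of_forall_iff {B : Type v} [Nonempty B] {p : Prop} {ψ : B → Prop}
    (h : ∀ y, ψ y ↔ p) : InstEquiv (truthDeg p) ψ :=
  ⟨fun _ => ⟨Classical.arbitrary B, (h _).1⟩, fun y => ⟨(), (h y).2⟩⟩

theorem iInf2_truthDeg_iff (p q : Prop) (x : Unit × Unit) :
    iInf2 (truthDeg p) (truthDeg q) x ↔ p ∨ q :=
  Iff.rfl

theorem piInf_truthDeg_iff {I : Type u} (φ : I → Prop) (f : I → {s : Set Unit // s.Nonempty}) :
    piInf (fun i => truthDeg (φ i)) f ↔ ∃ i, φ i :=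
  ⟨fun ⟨i, _, _, hi⟩ => ⟨i, hi⟩, fun ⟨i, hi⟩ => ⟨i, (f i).2.some, (f i).2.some_mem, hi⟩⟩

instance {α : Type u} [Nonempty α] : Nonempty {s : Set α // s.Nonempty} :=
  ⟨⟨Set.univ, Set.univ_nonempty⟩⟩

theorem truthDeg_antimonotone_embedding :
    (∀ p q : Prop, InstRed (truthDeg p) (truthDeg q) ↔ (q → p)) ∧
    InstEquiv (truthDeg True) (fun _ : Unit => True) ∧
    (∀ {B : Type v} (ψ : B → Prop), InstRed ψ (truthDeg False)) ∧
    (∀ p q : Prop, InstEquiv (truthDeg (p ∨ q)) (iInf2 (truthDeg p) (truthDeg q))) ∧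
    (∀ {A : Type u} (φ : A → Prop),
      InstEquiv (truthDeg (∃ x : A, φ x)) (piInf (fun x : A => truthDeg (φ x)))) := by
  refine ⟨fun p q => ?_, instEquiv_truthDeg_of_forall_iff fun _ => Iff.rfl,
    fun ψ => (instRed_truthDeg_iff ψ False).2 False.elim,
    fun p q => instEquiv_truthDeg_of_forall_iff (iInf2_truthDeg_iff p q),
    fun φ => instEquiv_truthDeg_of_forall_iff (piInf_truthDeg_iff φ)⟩
  rw [instRed_truthDeg_iff]
  exact ⟨fun h hq => h hq (), fun h hq _ => h hq⟩
end

section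
/- The following are equivalent: (1) excluded middle, ∀ p : Prop, p ∨ ¬ p; (2) every predicate φ : A → Prop is instance equivalent to the empty predicate on the empty type, or to the constantly true predicate on Unit, or to the constantly false predicate on Unit; (3) instance reducibility is total: for all predicates φ : A → Prop and ψ : B → Prop, φ ≤ᵢ ψ or ψ ≤ᵢ φ; (4) every predicate φ : A → Prop satisfies φ ≤ᵢ (fun _ : Unit => True) or (fun _ : Unit => True) ≤ᵢ φ. -/
universe u

/-!
Given excluded middle, a predicate `φ` on `A` falls into one of three cases: `A` is empty, `φ`
fails somewhere, or `A` is inhabited and `φ` holds everywhere. These cases are exactly instance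
equivalence with the empty predicate, the false predicate and the true predicate, and looking at
the cases of two predicates shows that they are comparable. Conversely, for a proposition `p`,
comparing the false predicate on the type of proofs of `p` with the true predicate on `Unit`
decides `p`.
-/

namespace InstRed

variable {A B C : Type*} {φ : A → Prop} {ψ : B → Prop} {χ : C → Prop}

theorem trans (hφψ : InstRed φ ψ) (hψχ : InstRed ψ χ) : InstRed φ χ := fun x =>
  let ⟨y, hy⟩ := hφψ x
  let ⟨z, hz⟩ := hψχ y
  ⟨z, hy ∘ hz⟩

theorem of_isEmpty [IsEmpty A] : InstRed φ ψ := isEmptyElim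

theorem of_exists_not (h : ∃ y, ¬ ψ y) : InstRed φ ψ := fun _ =>
  let ⟨y, hy⟩ := h
  ⟨y, fun hψ => absurd hψ hy⟩

theorem of_forall [Nonempty B] (h : ∀ x, φ x) : InstRed φ ψ := fun x =>
  let ⟨y⟩ := ‹Nonempty B›
  ⟨y, fun _ => h x⟩

end InstRed

section

variable {A B : Type*} {φ : A → Prop}

theorem instRed_true_iff [Nonempty B] : InstRed φ (fun _ : B => True) ↔ ∀ x, φ x :=
  ⟨fun h x => let ⟨_, hx⟩ := h x; hx trivial, InstRed.of_forall⟩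

theorem true_instRed_iff [Nonempty B] : InstRed (fun _ : B => True) φ ↔ Nonempty A :=
  ⟨fun h => let ⟨y⟩ := ‹Nonempty B›; let ⟨x, _⟩ := h y; ⟨x⟩,
    fun ⟨x⟩ _ => ⟨x, fun _ => trivial⟩⟩

theorem isEmpty_or_exists_not_or_forall (em : ∀ p : Prop, p ∨ ¬ p) (φ : A → Prop) :
    IsEmpty A ∨ (∃ x, ¬ φ x) ∨ (Nonempty A ∧ ∀ x, φ x) := by
  rcases em (Nonempty A) with hA | hA
  · rcases em (∃ x, ¬ φ x) with hφ | hφ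
    · exact Or.inr (Or.inl hφ)
    · exact Or.inr (Or.inr ⟨hA, fun x => (em (φ x)).resolve_right fun hx => hφ ⟨x, hx⟩⟩)
  · exact Or.inl (not_nonempty_iff.mp hA)

end

theorem instRed_trivial_tfae :
    [ -- (1) excluded middle
      ∀ p : Prop, p ∨ ¬ p,
      -- (2) every degree is ⊥, the true degree, or ⊤
      ∀ (A : Type u) (φ : A → Prop),
        InstEquiv φ (fun _ : Empty => False) ∨
        InstEquiv φ (fun _ : Unit => True) ∨
        InstEquiv φ (fun _ : Unit => False),
      -- (3) instance reducibility is total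
      ∀ (A B : Type u) (φ : A → Prop) (ψ : B → Prop), InstRed φ ψ ∨ InstRed ψ φ,
      -- (4) every degree is below or above the true degree
      ∀ (A : Type u) (φ : A → Prop),
        InstRed φ (fun _ : Unit => True) ∨ InstRed (fun _ : Unit => True) φ
    ].TFAE := by
  tfae_have 1 → 2 := fun em A φ => by
    rcases isEmpty_or_exists_not_or_forall em φ with hA | hφ | ⟨hA, hφ⟩
    · exact Or.inl ⟨.of_isEmpty, .of_isEmpty⟩
    · exact Or.inr (Or.inr ⟨.of_exists_not ⟨(), id⟩, .of_exists_not hφ⟩)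
    · exact Or.inr (Or.inl ⟨.of_forall hφ, .of_forall fun _ => trivial⟩)
  tfae_have 2 → 4 := fun h2 A φ => by
    rcases h2 A φ with h | h | h
    · exact Or.inl (h.1.trans .of_isEmpty)
    · exact Or.inl h.1
    · exact Or.inr ((InstRed.of_exists_not ⟨(), id⟩).trans h.2)
  tfae_have 1 → 3 := fun em A B φ ψ => by
    rcases isEmpty_or_exists_not_or_forall em φ with hA | hφ | ⟨hA, hφ⟩
    · exact Or.inl .of_isEmpty
    · exact Or.inr (.of_exists_not hφ)
    rcases isEmpty_or_exists_not_or_forall em ψ with hB | hψ | ⟨hB, -⟩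
    · exact Or.inr .of_isEmpty
    · exact Or.inl (.of_exists_not hψ)
    · exact Or.inl (.of_forall hφ)
  tfae_have 3 → 4 := fun h3 A φ =>
    (h3 A PUnit φ (fun _ => True)).imp (·.trans (.of_forall fun _ => trivial))
      (InstRed.trans (.of_forall fun _ => trivial))
  tfae_have 4 → 1 := fun h4 p => by
    rcases h4 (ULift.{u} (PLift p)) (fun _ => False) with h | h
    · exact Or.inr fun hp => instRed_true_iff.mp h ⟨⟨hp⟩⟩
    · obtain ⟨⟨⟨hp⟩⟩⟩ := true_instRed_iff.mp h
      exact Or.inl hp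
  tfae_finish
end

section
/- A predicate φ : A → Prop is ¬¬-dense, i.e., ∀ x : A, ¬¬ φ x, if and only if φ is instance reducible to the predicate LEM on Prop defined by LEM p ↔ (p ∨ ¬ p). -/
universe u v

theorem not_not_or_not (p : Prop) : ¬¬(p ∨ ¬p) :=
  fun h => h (Or.inr fun hp => h (Or.inl hp))

theorem InstRed.not_not {A : Type u} {B : Type v} {φ : A → Prop} {ψ : B → Prop}
    (h : InstRed φ ψ) (hψ : ∀ y : B, ¬¬ψ y) (x : A) : ¬¬φ x := fun hx =>
  let ⟨y, hy⟩ := h x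
  hψ y (hx ∘ hy)

theorem instRed_or_not_of_not_not {A : Type u} {φ : A → Prop} (h : ∀ x : A, ¬¬φ x) :
    InstRed φ (fun p : Prop => p ∨ ¬p) :=
  fun x => ⟨φ x, fun hx => hx.resolve_right (h x)⟩

theorem dense_iff_instRed_lem {A : Type u} (φ : A → Prop) :
    (∀ x : A, ¬¬ φ x) ↔ InstRed φ (fun p : Prop => p ∨ ¬ p) :=
  ⟨instRed_or_not_of_not_not, fun h => h.not_not not_not_or_not⟩
end

section
/- Let (A, ·) be a partial combinatory algebra with elementary sub-pca A′ ⊆ A. The map U ↦ extw U, where extw U r = {U[r]} if r ∈ supp U and extw U r = ∅ otherwise, and the map f ↦ U_f, where U_f = {(r, s) | ∃ θ ∈ f r, s ∈ θ}, constitute an equivalence between the preorder of ordinary Weihrauch predicates under ordinary Weihrauch reducibility and the preorder of ¬¬-dense modest extended Weihrauch predicates under extended Weihrauch reducibility: extw U is always ¬¬-dense and modest; U ≤_W V implies extw U ≤_eW extw V; f ≤_eW g implies U_f ≤_W U_g (for ¬¬-dense modest f, g); U_{extw U} = U for every ordinary Weihrauch predicate U; and extw (U_f) = f for every ¬¬-dense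 modest extended Weihrauch predicate f. -/
namespace Stmt18

variable {A : Type}

/-- Extend a partial application `app : A → A → Part A` to partial elements. -/
def pap (app : A → A → Part A) (x y : Part A) : Part A :=
  x.bind fun a => y.bind fun b => app a b

/-- `K` and `S` are combinators for the partial application `app`. -/
def IsCombinators (app : A → A → Part A) (K S : A) : Prop :=
  (∀ a : A, (app K a).Dom) ∧
  (∀ a b : A, pap app (app K a) (Part.some b) = Part.some a) ∧
  (∀ a b : A, (pap app (app S a) (Part.some b)).Dom) ∧
  (∀ a b c : A,
    pap app (pap app (app S a) (Part.some b)) (Part.some c) =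
      pap app (app a c) (app b c))

/-- `(A, app)` is a partial combinatory algebra. -/
def IsPCA (app : A → A → Part A) : Prop :=
  ∃ K S : A, IsCombinators app K S

/-- `A'` is an elementary sub-pca: closed under application and containing
suitable `K` and `S`. -/
def IsSubPCA (app : A → A → Part A) (A' : Set A) : Prop :=
  (∀ a ∈ A', ∀ b ∈ A', ∀ c ∈ app a b, c ∈ A') ∧
  (∃ K ∈ A', ∃ S ∈ A', IsCombinators app K S)

/-- Support of an ordinary Weihrauch predicate `U ⊆ A × A`. -/
def wSupp (U : Set (A × A)) : Set A := {r | ∃ s, (r, s) ∈ U}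

/-- Ordinary Weihrauch reducibility relative to `A'`. -/
def WRed (app : A → A → Part A) (A' : Set A) (U V : Set (A × A)) : Prop :=
  ∃ l₁ ∈ A', ∃ l₂ ∈ A', ∀ r ∈ wSupp U,
    (∃ t ∈ app l₁ r, t ∈ wSupp V ∧
      ∀ s, (t, s) ∈ V → ∃ v ∈ pap app (app l₂ r) (Part.some s), (r, v) ∈ U)

/-- Support of an extended Weihrauch predicate. -/
def eSupp (f : A → Set (Set A)) : Set A := {r | f r ≠ ∅}

/-- Extended Weihrauch reducibility relative to `A'`. -/
def EWRed (app : A → A → Part A) (A' : Set A) (f g : A → Set (Set A)) : Prop :=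
  ∃ l₁ ∈ A', ∃ l₂ ∈ A', ∀ r ∈ eSupp f,
    (∃ t ∈ app l₁ r, t ∈ eSupp g ∧
      ∀ θ ∈ f r, ∃ ξ ∈ g t, ∀ s ∈ ξ,
        ∃ v ∈ pap app (app l₂ r) (Part.some s), v ∈ θ)

/-- An extended Weihrauch predicate is modest when each `f r` has at most one element. -/
def Modest (f : A → Set (Set A)) : Prop := ∀ r : A, (f r).Subsingleton

/-- An extended Weihrauch predicate is `¬¬`-dense when all its values consist of
nonempty sets of realizers. -/
def Dense (f : A → Set (Set A)) : Prop := ∀ r : A, ∀ θ ∈ f r, θ ≠ ∅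

/-- Embedding of ordinary into extended Weihrauch predicates. -/
def extw (U : Set (A × A)) : A → Set (Set A) :=
  fun r => {θ | r ∈ wSupp U ∧ θ = {s | (r, s) ∈ U}}

/-- The ordinary Weihrauch predicate associated with an extended one. -/
def ordw (f : A → Set (Set A)) : Set (A × A) :=
  {p | ∃ θ ∈ f p.1, p.2 ∈ θ}

theorem mem_eSupp_iff {f : A → Set (Set A)} {r : A} : r ∈ eSupp f ↔ (f r).Nonempty :=
  Set.nonempty_iff_ne_empty.symm

section Extw

variable {U V : Set (A × A)}

theorem mem_extw_iff {r : A} {θ : Set A} :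
    θ ∈ extw U r ↔ r ∈ wSupp U ∧ θ = {s | (r, s) ∈ U} :=
  Iff.rfl

theorem eSupp_extw : eSupp (extw U) = wSupp U := by
  ext r
  simp only [mem_eSupp_iff, Set.Nonempty, mem_extw_iff, exists_and_left, exists_eq, and_true]

theorem dense_extw : Dense (extw U) := by
  rintro r θ ⟨⟨s, hs⟩, rfl⟩
  exact Set.nonempty_iff_ne_empty.mp ⟨s, hs⟩

theorem modest_extw : Modest (extw U) := by
  rintro r θ ⟨-, rfl⟩ θ' ⟨-, rfl⟩
  rfl

theorem ordw_extw : ordw (extw U) = U := by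
  ext ⟨r, s⟩
  constructor
  · rintro ⟨θ, ⟨-, rfl⟩, hs⟩
    exact hs
  · intro h
    exact ⟨_, ⟨⟨s, h⟩, rfl⟩, h⟩

theorem WRed.extw {app : A → A → Part A} {A' : Set A} (h : WRed app A' U V) :
    EWRed app A' (extw U) (extw V) := by
  obtain ⟨l₁, hl₁, l₂, hl₂, h⟩ := h
  refine ⟨l₁, hl₁, l₂, hl₂, fun r hr => ?_⟩
  obtain ⟨t, ht, htV, hback⟩ := h r (eSupp_extw ▸ hr)
  refine ⟨t, ht, eSupp_extw ▸ htV, ?_⟩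
  rintro θ ⟨-, rfl⟩
  exact ⟨{s | (t, s) ∈ V}, ⟨htV, rfl⟩, hback⟩

end Extw

section Ordw

variable {f g : A → Set (Set A)}

theorem wSupp_ordw_subset : wSupp (ordw f) ⊆ eSupp f := by
  rintro r ⟨s, θ, hθ, -⟩
  exact mem_eSupp_iff.mpr ⟨θ, hθ⟩

theorem wSupp_ordw (hf : Dense f) : wSupp (ordw f) = eSupp f := by
  refine wSupp_ordw_subset.antisymm fun r hr => ?_
  obtain ⟨θ, hθ⟩ := mem_eSupp_iff.mp hr
  obtain ⟨s, hs⟩ := Set.nonempty_iff_ne_empty.mpr (hf r θ hθ)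
  exact ⟨s, θ, hθ, hs⟩

theorem setOf_mem_ordw_eq (hf : Modest f) {r : A} {θ : Set A} (hθ : θ ∈ f r) :
    {s | (r, s) ∈ ordw f} = θ := by
  ext s
  constructor
  · rintro ⟨θ', hθ', hs⟩
    rwa [hf r hθ' hθ] at hs
  · exact fun hs => ⟨θ, hθ, hs⟩

theorem extw_ordw (hd : Dense f) (hm : Modest f) : extw (ordw f) = f := by
  funext r
  ext θ
  rw [mem_extw_iff]
  constructor
  · rintro ⟨⟨_, θ₀, hθ₀, _⟩, rfl⟩
    rwa [setOf_mem_ordw_eq hm hθ₀]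
  · intro hθ
    exact ⟨(wSupp_ordw hd).symm ▸ mem_eSupp_iff.mpr ⟨θ, hθ⟩, (setOf_mem_ordw_eq hm hθ).symm⟩

/-- Only the target needs to be dense and modest: density puts `ℓ₁ r` in the support of
`ordw g`, and modesty makes every `ordw g`-answer lie in the single set `ξ ∈ g (ℓ₁ r)`. -/
theorem EWRed.ordw {app : A → A → Part A} {A' : Set A} (hd : Dense g) (hm : Modest g)
    (h : EWRed app A' f g) : WRed app A' (ordw f) (ordw g) := by
  obtain ⟨l₁, hl₁, l₂, hl₂, h⟩ := h
  refine ⟨l₁, hl₁, l₂, hl₂, fun r hr => ?_⟩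
  obtain ⟨t, ht, htg, hback⟩ := h r (wSupp_ordw_subset hr)
  obtain ⟨_, θ, hθ, _⟩ := hr
  obtain ⟨ξ, hξ, hξθ⟩ := hback θ hθ
  refine ⟨t, ht, (wSupp_ordw hd).symm ▸ htg, fun s hs => ?_⟩
  obtain ⟨v, hv, hvθ⟩ := hξθ s (setOf_mem_ordw_eq hm hξ ▸ hs)
  exact ⟨v, hv, θ, hθ, hvθ⟩

end Ordw

theorem ordinary_equiv_dense_modest_extended_general
    (app : A → A → Part A) (A' : Set A) :
    (∀ U : Set (A × A), Dense (extw U) ∧ Modest (extw U)) ∧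
    (∀ U V : Set (A × A), WRed app A' U V → EWRed app A' (extw U) (extw V)) ∧
    (∀ f g : A → Set (Set A), Dense f → Modest f → Dense g → Modest g →
      EWRed app A' f g → WRed app A' (ordw f) (ordw g)) ∧
    (∀ U : Set (A × A), ordw (extw U) = U) ∧
    (∀ f : A → Set (Set A), Dense f → Modest f → extw (ordw f) = f) :=
  ⟨fun _ => ⟨dense_extw, modest_extw⟩, fun _ _ => WRed.extw,
    fun _ _ _ _ hd hm => EWRed.ordw hd hm, fun _ => ordw_extw,
    fun _ hd hm => extw_ordw hd hm⟩

theorem ordinary_equiv_dense_modest_extended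
    (app : A → A → Part A) (A' : Set A) (hsub : IsSubPCA app A') :
    (∀ U : Set (A × A), Dense (extw U) ∧ Modest (extw U)) ∧
    (∀ U V : Set (A × A), WRed app A' U V → EWRed app A' (extw U) (extw V)) ∧
    (∀ f g : A → Set (Set A), Dense f → Modest f → Dense g → Modest g →
      EWRed app A' f g → WRed app A' (ordw f) (ordw g)) ∧
    (∀ U : Set (A × A), ordw (extw U) = U) ∧
    (∀ f : A → Set (Set A), Dense f → Modest f → extw (ordw f) = f) :=
  ordinary_equiv_dense_modest_extended_general app A'

end Stmt18
end

section
/- Let (A, ·) be a partial combinatory algebra with elementary sub-pca A′ ⊆ A. Extended Weihrauch reducibility and instance reducibility of realizability predicates on assemblies are equivalent preorders. Concretely: (1) the map sending a realizability predicate φ : |S| → Set A on an assembly S to the extended Weihrauch predicate f_{(φ,S)} with f_{(φ,S)}(r) = {θ ∈ Set A | ∃ x ∈ |S|, r ⊩_S x ∧ θ = φ x} is monotone: (φ, S) ⪯ (ψ, T) implies f_{(φ,S)} ≤_eW f_{(ψ,T)}; (2) the map sending an extended Weihrauch predicate f to the realizability predicate φ_f on the assembly S_f, where |S_f| = {(r,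 θ) ∈ A × Set A | θ ∈ f r}, s ⊩_{S_f} (r, θ) iff s = r, and φ_f(r, θ) = θ, is monotone: f ≤_eW g implies (φ_f, S_f) ⪯ (φ_g, S_g); (3) f_{(φ_f, S_f)} = f for every extended Weihrauch predicate f; and (4) (φ_{f_{(φ,S)}}, S_{f_{(φ,S)}}) and (φ, S) are instance reducible to each other for every realizability predicate (φ, S). -/
/-!
The two translations are inverse up to equivalence because they carry the same data: a realizer
`r` of an instance `x` together with the set of answers `φ x` accepted for it. Reductions translate
verbatim with the same pair of codes `ℓ₁, ℓ₂`; only the last part needs new codes, namely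
`I = S K K` (the realizer is passed on unchanged) and `K I` (the answer is passed back unchanged),
both of which lie in `A'` by closure under application.
-/

namespace Stmt19

variable {A : Type}

/-- Extend a partial application `app : A → A → Part A` to partial elements. -/
def pap (app : A → A → Part A) (x y : Part A) : Part A :=
  x.bind fun a => y.bind fun b => app a b

/-- `K` and `S` are combinators for the partial application `app`. -/
def IsCombinators (app : A → A → Part A) (K S : A) : Prop :=
  (∀ a : A, (app K a).Dom) ∧
  (∀ a b : A, pap app (app K a) (Part.some b) = Part.some a) ∧
  (∀ a b : A, (pap app (app S a) (Part.some b)).Dom) ∧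
  (∀ a b c : A,
    pap app (pap app (app S a) (Part.some b)) (Part.some c) =
      pap app (app a c) (app b c))

/-- `A'` is an elementary sub-pca: closed under application and containing
suitable `K` and `S`. -/
def IsSubPCA (app : A → A → Part A) (A' : Set A) : Prop :=
  (∀ a ∈ A', ∀ b ∈ A', ∀ c ∈ app a b, c ∈ A') ∧
  (∃ K ∈ A', ∃ S ∈ A', IsCombinators app K S)

/-- An assembly over `A`: a carrier together with a total realizability relation. -/
structure Assembly (A : Type) where
  carrier : Type
  rz : A → carrier → Prop
  total : ∀ x : carrier, ∃ r : A, rz r x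

/-- Instance reducibility of realizability predicates on assemblies. -/
def InstRedRz (app : A → A → Part A) (A' : Set A) (S T : Assembly A)
    (φ : S.carrier → Set A) (ψ : T.carrier → Set A) : Prop :=
  ∃ l₁ ∈ A', ∃ l₂ ∈ A', ∀ (s : A) (x : S.carrier), S.rz s x →
    ∃ y : T.carrier, (∃ t ∈ app l₁ s, T.rz t y) ∧
      ∀ p ∈ ψ y, ∃ v ∈ pap app (app l₂ s) (Part.some p), v ∈ φ x

/-- Support of an extended Weihrauch predicate. -/
def eSupp (f : A → Set (Set A)) : Set A := {r | f r ≠ ∅}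

/-- Extended Weihrauch reducibility relative to `A'`. -/
def EWRed (app : A → A → Part A) (A' : Set A) (f g : A → Set (Set A)) : Prop :=
  ∃ l₁ ∈ A', ∃ l₂ ∈ A', ∀ r ∈ eSupp f,
    (∃ t ∈ app l₁ r, t ∈ eSupp g ∧
      ∀ θ ∈ f r, ∃ ξ ∈ g t, ∀ s ∈ ξ,
        ∃ v ∈ pap app (app l₂ r) (Part.some s), v ∈ θ)

/-- The extended Weihrauch predicate associated with a realizability predicate
on an assembly. -/
def toEW (S : Assembly A) (φ : S.carrier → Set A) : A → Set (Set A) :=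
  fun r => {θ | ∃ x : S.carrier, S.rz r x ∧ θ = φ x}

/-- The assembly associated with an extended Weihrauch predicate. -/
def toAsm (f : A → Set (Set A)) : Assembly A where
  carrier := {p : A × Set A // p.2 ∈ f p.1}
  rz s p := s = p.val.1
  total p := ⟨p.val.1, rfl⟩

/-- The realizability predicate associated with an extended Weihrauch predicate. -/
def toPred (f : A → Set (Set A)) : (toAsm f).carrier → Set A :=
  fun p => p.val.2

section

variable {app : A → A → Part A}

@[simp]
theorem pap_some_some (a b : A) : pap app (Part.some a) (Part.some b) = app a b := by
  simp [pap]

theorem mem_pap_some {x : Part A} {b c : A} :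
    c ∈ pap app x (Part.some b) ↔ ∃ a ∈ x, c ∈ app a b := by
  simp [pap]

namespace IsCombinators

variable {K S : A}

theorem exists_app_K_eq_some (h : IsCombinators app K S) (a : A) : ∃ k, app K a = Part.some k :=
  ⟨_, Part.eq_some_iff.mpr (Part.get_mem (h.1 a))⟩

theorem exists_id (h : IsCombinators app K S) :
    ∃ i ∈ pap app (app S K) (Part.some K), ∀ x, app i x = Part.some x := by
  obtain ⟨i, hi⟩ : ∃ i, pap app (app S K) (Part.some K) = Part.some i :=
    ⟨_, Part.eq_some_iff.mpr (Part.get_mem (h.2.2.1 K K))⟩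
  refine ⟨i, hi ▸ Part.mem_some i, fun x => ?_⟩
  obtain ⟨k, hk⟩ := h.exists_app_K_eq_some x
  calc app i x = pap app (Part.some i) (Part.some x) := (pap_some_some i x).symm
    _ = pap app (app K x) (app K x) := by rw [← hi, h.2.2.2]
    _ = pap app (app K x) (Part.some k) := congrArg (pap app (app K x)) hk
    _ = Part.some x := h.2.1 x k

theorem exists_const_app (h : IsCombinators app K S) (a : A) :
    ∃ k ∈ app K a, ∀ s, app k s = Part.some a := by
  obtain ⟨k, hk⟩ := h.exists_app_K_eq_some a
  refine ⟨k, hk ▸ Part.mem_some k, fun s => ?_⟩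
  rw [← pap_some_some (app := app), ← hk, h.2.1]

end IsCombinators

namespace IsSubPCA

variable {A' : Set A}

theorem exists_id (h : IsSubPCA app A') : ∃ i ∈ A', ∀ x, app i x = Part.some x := by
  obtain ⟨hcl, K, hK, S, hS, hKS⟩ := h
  obtain ⟨i, hi, hix⟩ := hKS.exists_id
  obtain ⟨a, ha, hia⟩ := mem_pap_some.mp hi
  exact ⟨i, hcl a (hcl S hS K hK a ha) K hK i hia, hix⟩

theorem exists_snd (h : IsSubPCA app A') :
    ∃ k ∈ A', ∀ s p, pap app (app k s) (Part.some p) = Part.some p := by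
  obtain ⟨i, hiA, hix⟩ := h.exists_id
  obtain ⟨hcl, K, hK, S, -, hKS⟩ := h
  obtain ⟨k, hk, hks⟩ := hKS.exists_const_app i
  exact ⟨k, hcl K hK i hiA k hk, fun s p => by rw [hks, pap_some_some, hix]⟩

theorem instRedRz_of_forall_rz (h : IsSubPCA app A') {S T : Assembly A}
    {φ : S.carrier → Set A} {ψ : T.carrier → Set A}
    (hST : ∀ s x, S.rz s x → ∃ y, T.rz s y ∧ ψ y ⊆ φ x) :
    InstRedRz app A' S T φ ψ := by
  obtain ⟨i, hiA, hix⟩ := h.exists_id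
  obtain ⟨k, hkA, hks⟩ := h.exists_snd
  refine ⟨i, hiA, k, hkA, fun s x hsx => ?_⟩
  obtain ⟨y, hsy, hψφ⟩ := hST s x hsx
  refine ⟨y, ⟨s, by rw [hix]; exact Part.mem_some s, hsy⟩, fun p hp => ?_⟩
  exact ⟨p, by rw [hks]; exact Part.mem_some p, hψφ hp⟩

end IsSubPCA

variable {A' : Set A}

theorem ewRed_toEW_of_instRedRz {S T : Assembly A} {φ : S.carrier → Set A}
    {ψ : T.carrier → Set A} (hST : InstRedRz app A' S T φ ψ) :
    EWRed app A' (toEW S φ) (toEW T ψ) := by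
  obtain ⟨l₁, hl₁, l₂, hl₂, hred⟩ := hST
  refine ⟨l₁, hl₁, l₂, hl₂, fun r hr => ?_⟩
  obtain ⟨-, x₀, hx₀, -⟩ := Set.nonempty_iff_ne_empty.mpr hr
  obtain ⟨y₀, ⟨t, ht, hty₀⟩, -⟩ := hred r x₀ hx₀
  refine ⟨t, ht, Set.nonempty_iff_ne_empty.mp ⟨ψ y₀, y₀, hty₀, rfl⟩, ?_⟩
  rintro _ ⟨x, hx, rfl⟩
  obtain ⟨y, ⟨t', ht', hty⟩, hback⟩ := hred r x hx
  -- application is single-valued, so every instance realized by `r` is sent to the same `t`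
  obtain rfl : t' = t := Part.mem_unique ht' ht
  exact ⟨ψ y, ⟨y, hty, rfl⟩, hback⟩

theorem instRedRz_toAsm_of_ewRed {f g : A → Set (Set A)} (hfg : EWRed app A' f g) :
    InstRedRz app A' (toAsm f) (toAsm g) (toPred f) (toPred g) := by
  obtain ⟨l₁, hl₁, l₂, hl₂, hred⟩ := hfg
  refine ⟨l₁, hl₁, l₂, hl₂, ?_⟩
  rintro s ⟨⟨r, θ⟩, hθ⟩ (rfl : s = r)
  obtain ⟨t, ht, -, hforth⟩ := hred s (Set.nonempty_iff_ne_empty.mp ⟨θ, hθ⟩)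
  obtain ⟨ξ, hξ, hback⟩ := hforth θ hθ
  exact ⟨⟨(t, ξ), hξ⟩, ⟨t, ht, rfl⟩, hback⟩

theorem toEW_toAsm (f : A → Set (Set A)) : toEW (toAsm f) (toPred f) = f := by
  ext r θ
  constructor
  · rintro ⟨⟨⟨r', θ'⟩, hθ'⟩, (rfl : r = r'), rfl⟩
    exact hθ'
  · exact fun hθ => ⟨⟨(r, θ), hθ⟩, rfl, rfl⟩

theorem instRedRz_toAsm_toEW_self (h : IsSubPCA app A') (S : Assembly A)
    (φ : S.carrier → Set A) :
    InstRedRz app A' (toAsm (toEW S φ)) S (toPred (toEW S φ)) φ :=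
  h.instRedRz_of_forall_rz <| by
    rintro s ⟨⟨r, θ⟩, x, hx, hθ⟩ (rfl : s = r)
    exact ⟨x, hx, hθ.symm.subset⟩

theorem instRedRz_self_toAsm_toEW (h : IsSubPCA app A') (S : Assembly A)
    (φ : S.carrier → Set A) :
    InstRedRz app A' S (toAsm (toEW S φ)) φ (toPred (toEW S φ)) :=
  h.instRedRz_of_forall_rz fun s x hx => ⟨⟨(s, φ x), x, hx, rfl⟩, rfl, subset_rfl⟩

end

theorem extended_weihrauch_equiv_instance
    (app : A → A → Part A) (A' : Set A) (hsub : IsSubPCA app A') :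
    (∀ (S T : Assembly A) (φ : S.carrier → Set A) (ψ : T.carrier → Set A),
      InstRedRz app A' S T φ ψ → EWRed app A' (toEW S φ) (toEW T ψ)) ∧
    (∀ f g : A → Set (Set A),
      EWRed app A' f g →
        InstRedRz app A' (toAsm f) (toAsm g) (toPred f) (toPred g)) ∧
    (∀ f : A → Set (Set A), toEW (toAsm f) (toPred f) = f) ∧
    (∀ (S : Assembly A) (φ : S.carrier → Set A),
      InstRedRz app A' (toAsm (toEW S φ)) S (toPred (toEW S φ)) φ ∧
      InstRedRz app A' S (toAsm (toEW S φ)) φ (toPred (toEW S φ))) :=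
  ⟨fun _ _ _ _ => ewRed_toEW_of_instRedRz, fun _ _ => instRedRz_toAsm_of_ewRed, toEW_toAsm,
    fun S φ => ⟨instRedRz_toAsm_toEW_self hsub S φ, instRedRz_self_toAsm_toEW hsub S φ⟩⟩

end Stmt19
end
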